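/- arXiv:1111.3311 — 6 statements merged into one kernel-verified Lean document; each statement's English description precedes it below -/
import Mathlib

section
/- Let (a_k)_{k≥1} be real numbers with γ² := ∑_{k=1}^∞ a_k/k ∈ (0,∞) and ∑_{k=1}^∞ |a_k|/k < ∞. For n ∈ ℕ set α = γ n^{-1/2} and E_n := ∑_{k=1}^∞ k a_k S_2(kα), where S_2(t) = e^{-t}(1-e^{-t})^{-2}. Then E_n / n → 1 as n → ∞. -/
/-!
Write `S₂ t = e^{-t} / (1 - e^{-t})²` and `α = γ / √n`. Since `α² = γ² / n`,
`E_n / n = γ⁻² ∑ₖ (aₖ / k) · (kα)² S₂(kα)`. The factor `t² S₂(t)` tends to `1` as `t → 0⁺` and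
is bounded by `1` for `t > 0`, so dominated convergence against `∑ |aₖ| / k` gives `E_n / n → γ⁻² ∑ₖ aₖ / k = 1`.
-/

open Filter Topology Real

noncomputable def S₂ (t : ℝ) : ℝ := exp (-t) / (1 - exp (-t)) ^ 2

lemma S₂_nonneg (t : ℝ) : 0 ≤ S₂ t := by
  unfold S₂
  positivity

lemma sq_mul_S₂_le_one {t : ℝ} (ht : 0 < t) : t ^ 2 * S₂ t ≤ 1 := by
  have hhalf : 0 < exp (-(t / 2)) := exp_pos _
  have hsq_half : exp (-(t / 2)) * exp (-(t / 2)) = exp (-t) := by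
    rw [← exp_add]; ring_nf
  have hinv_half : exp (t / 2) * exp (-(t / 2)) = 1 := by
    rw [← exp_add]; simp
  -- `t ≤ 2 sinh (t/2)`, multiplied by `e^{-t/2}`
  have hkey : t * exp (-(t / 2)) ≤ 1 - exp (-t) := by
    have hsinh : t / 2 ≤ sinh (t / 2) := self_le_sinh_iff.mpr (by linarith)
    rw [sinh_eq] at hsinh
    nlinarith
  have hsq : t ^ 2 * exp (-t) ≤ (1 - exp (-t)) ^ 2 := by
    nlinarith [mul_pos ht hhalf]
  rw [S₂, mul_div_assoc']
  exact div_le_one_of_le₀ hsq (sq_nonneg _)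

lemma tendsto_sq_mul_S₂ : Tendsto (fun t => t ^ 2 * S₂ t) (𝓝[>] 0) (𝓝 1) := by
  have hderiv : HasDerivAt (fun t => 1 - exp (-t)) 1 0 := by
    simpa using ((hasDerivAt_exp (-0)).comp 0 (hasDerivAt_neg 0)).const_sub 1
  have hslope : Tendsto (fun t => (1 - exp (-t)) / t) (𝓝[>] 0) (𝓝 1) := by
    refine ((hasDerivAt_iff_tendsto_slope.mp hderiv).mono_left
      (nhdsWithin_mono _ fun t ht => ne_of_gt ht)).congr fun t => ?_
    simp [slope_def_field, div_eq_inv_mul]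
  have hexp : Tendsto (fun t => exp (-t)) (𝓝[>] 0) (𝓝 1) := by
    simpa using ((continuous_neg.rexp).tendsto 0).mono_left nhdsWithin_le_nhds
  have h := hexp.mul ((hslope.inv₀ one_ne_zero).pow 2)
  rw [inv_one, one_pow, mul_one] at h
  refine h.congr fun t => ?_
  rw [S₂, inv_div, div_pow]
  ring

lemma tendsto_tsum_mul_of_tendsto_nhdsGT_zero {ι β : Type*} {l : Filter β} {c w : ι → ℝ}
    {φ : ℝ → ℝ} {C L : ℝ} {α : β → ℝ} (hc : Summable fun k => |c k|) (hw : ∀ k, 0 < w k)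
    (hφC : ∀ t > 0, |φ t| ≤ C) (hφ : Tendsto φ (𝓝[>] 0) (𝓝 L))
    (hα : Tendsto α l (𝓝[>] 0)) :
    Tendsto (fun n => ∑' k, c k * φ (w k * α n)) l (𝓝 ((∑' k, c k) * L)) := by
  rw [← tsum_mul_right]
  refine tendsto_tsum_of_dominated_convergence (bound := fun k => |c k| * C)
    (hc.mul_right C) (fun k => (hφ.comp ?_).const_mul (c k)) ?_
  · rw [tendsto_nhdsWithin_iff] at hα ⊢
    refine ⟨by simpa using hα.1.const_mul (w k), ?_⟩
    filter_upwards [hα.2] with n hn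
    exact mul_pos (hw k) hn
  · filter_upwards [(tendsto_nhdsWithin_iff.mp hα).2] with n hn k
    rw [Real.norm_eq_abs, abs_mul]
    exact mul_le_mul_of_nonneg_left (hφC _ (mul_pos (hw k) hn)) (abs_nonneg _)

lemma tendsto_div_sqrt_nhdsGT_zero {γ : ℝ} (hγ : 0 < γ) :
    Tendsto (fun n : ℕ => γ / √n) atTop (𝓝[>] 0) := by
  rw [tendsto_nhdsWithin_iff]
  refine ⟨?_, ?_⟩
  · simpa using (tendsto_sqrt_atTop.comp tendsto_natCast_atTop_atTop).const_div_atTop γ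
  · filter_upwards [eventually_gt_atTop 0] with n hn
    exact div_pos hγ (sqrt_pos.mpr (Nat.cast_pos.mpr hn))

theorem stmt_9 (a : ℕ → ℝ) (γ : ℝ) (hγ : 0 < γ)
    (hsum : Summable (fun k : ℕ => |a (k + 1)| / (k + 1)))
    (hγ2 : γ ^ 2 = ∑' k : ℕ, a (k + 1) / (k + 1)) :
    Tendsto
      (fun n : ℕ =>
        (∑' k : ℕ, ((k : ℝ) + 1) * a (k + 1) *
            (Real.exp (-(((k : ℝ) + 1) * (γ / Real.sqrt n))) /
              (1 - Real.exp (-(((k : ℝ) + 1) * (γ / Real.sqrt n)))) ^ 2)) / (n : ℝ))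
      atTop (nhds 1) := by
  have hc : Summable fun k : ℕ => |a (k + 1) / (k + 1) / γ ^ 2| := by
    refine (hsum.div_const (γ ^ 2)).congr fun k => ?_
    rw [abs_div, abs_div, abs_of_pos (Nat.cast_add_one_pos (α := ℝ) k), abs_of_pos (by positivity : 0 < γ ^ 2)]
  have hlim := tendsto_tsum_mul_of_tendsto_nhdsGT_zero hc (w := fun k : ℕ => (k : ℝ) + 1)
    (fun k => Nat.cast_add_one_pos k)
    (fun t ht => (abs_of_nonneg (mul_nonneg (sq_nonneg t) (S₂_nonneg t))).trans_le
      (sq_mul_S₂_le_one ht))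
    tendsto_sq_mul_S₂ (tendsto_div_sqrt_nhdsGT_zero hγ)
  rw [tsum_div_const, ← hγ2, div_self (by positivity), one_mul] at hlim
  refine hlim.congr' ?_
  filter_upwards [eventually_gt_atTop 0] with n hn
  have hsqrt : √(n : ℝ) ^ 2 = n := sq_sqrt (Nat.cast_nonneg n)
  rw [← tsum_div_const]
  congr 1 with k
  rw [S₂]
  generalize exp _ / _ = s
  field_simp
  rw [hsqrt]
  ring
end

section
/- Let (a_k)_{k≥1} satisfy ∑_k |a_k|/k < ∞ and γ² := ∑_k a_k/k > 0. Fix an integer q ≥ 1 and assume ∑_k k^{q}|a_k| e^{-kα} < ∞ for all α > 0. Setting α = γ n^{-1/2} and κ_q(n) := ∑_{ℓ=1}^∞ ℓ^q ∑_{k=1}^∞ k^q a_k e^{-kαℓ}, one has κ_q(n) ~ (q!/γ^{q-1}) n^{(q+1)/2} as n → ∞. -/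
/-!
Write `S(t) = ∑_{ℓ ≥ 1} ℓ^q e^{-tℓ}`. By absolute convergence the double sum is
`κ_q(n) = ∑_k k^q a_k S(kβ)` with `β = γ / √n`. Comparing `S` on unit intervals with the
Gamma integral `∫_0^∞ x^q e^{-cx} dx = q! / c^(q+1)` gives
`e^{-t} q! ≤ t^(q+1) S(t) ≤ e^t q!`, so `t^(q+1) S(t) → q!` as `t → 0⁺`; together with
`S(t) ≤ e^{-t/2} S(t/2)` this also bounds `t^(q+1) S(t) ≤ 2^(q+1) q!` for all `t > 0`.
Hence, by dominated convergence, `β^(q+1) κ_q(n) = ∑_k (a_k / k) (kβ)^(q+1) S(kβ)` tends to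
`q! ∑_k a_k / k = q! γ²`.
-/

open Filter Real Set MeasureTheory Topology
open scoped Nat

lemma integral_pow_mul_exp_neg_mul_Ioi (q : ℕ) {c : ℝ} (hc : 0 < c) :
    ∫ x in Ioi 0, x ^ q * exp (-(c * x)) = q ! / c ^ (q + 1) := by
  have key := integral_rpow_mul_exp_neg_mul_Ioi (a := q + 1) (by positivity) hc
  simp only [add_sub_cancel_right, rpow_natCast, Gamma_nat_eq_factorial] at key
  rw [key, one_div, inv_rpow hc.le, ← rpow_natCast, ← Nat.cast_succ, rpow_natCast,
    ← div_eq_inv_mul]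

lemma integrableOn_pow_mul_exp_neg_mul_Ioi (q : ℕ) {c : ℝ} (hc : 0 < c) :
    IntegrableOn (fun x => x ^ q * exp (-(c * x))) (Ioi 0) :=
  .of_integral_ne_zero (by rw [integral_pow_mul_exp_neg_mul_Ioi q hc]; positivity)

lemma hasSum_integral_Ioc_nat {f : ℝ → ℝ} (hf : IntegrableOn f (Ioi 0)) :
    HasSum (fun n : ℕ => ∫ x in Ioc (n : ℝ) (n + 1), f x) (∫ x in Ioi 0, f x) := by
  have hunion : (⋃ n : ℕ, Ioc (n : ℝ) (n + 1)) = Ioi 0 := by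
    simpa using iUnion_Ioc_map_succ_eq_Ioi (f := fun n : ℕ => (n : ℝ)) (by simp)
      fun ⟨b, hb⟩ => (exists_nat_gt b).elim fun n hn => (hb ⟨n, rfl⟩).not_gt hn
  have hdisj : Pairwise (Function.onFun Disjoint fun n : ℕ => Ioc (n : ℝ) (n + 1)) := by
    simpa using (Nat.mono_cast (α := ℝ)).pairwise_disjoint_on_Ioc_succ
  rw [← hunion] at hf ⊢
  exact hasSum_integral_iUnion (fun _ => measurableSet_Ioc) hdisj hf

noncomputable def powExpSeries (q : ℕ) (t : ℝ) : ℝ :=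
  ∑' ℓ : ℕ, ((ℓ + 1 : ℝ)) ^ q * exp (-(t * (ℓ + 1)))

lemma summable_powExpSeries (q : ℕ) {t : ℝ} (ht : 0 < t) :
    Summable fun ℓ : ℕ => ((ℓ + 1 : ℝ)) ^ q * exp (-(t * (ℓ + 1))) := by
  refine ((summable_nat_add_iff 1).2 (Real.summable_pow_mul_exp_neg_nat_mul q ht)).congr
    fun ℓ => ?_
  push_cast
  ring_nf

lemma powExpSeries_nonneg (q : ℕ) (t : ℝ) : 0 ≤ powExpSeries q t :=
  tsum_nonneg fun _ => by positivity

lemma mul_powExpSeries_le (q : ℕ) {c : ℝ} (hc : 0 < c) :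
    c ^ (q + 1) * powExpSeries q c ≤ exp c * q ! := by
  rw [← le_div_iff₀' (by positivity)]
  refine tsum_le_of_sum_range_le (fun _ => by positivity) fun M => ?_
  calc ∑ ℓ ∈ Finset.range M, ((ℓ + 1 : ℝ)) ^ q * exp (-(c * (ℓ + 1)))
      ≤ ∑ i ∈ Finset.range (M + 1), (i : ℝ) ^ q * exp (-(c * i)) := by
        rw [Finset.sum_range_succ']
        push_cast
        exact le_add_of_nonneg_right (by positivity)
    _ ≤ exp c * q ! / c ^ (q + 1) := by
        rw [Finset.range_eq_Ico]
        exact sum_Ico_pow_mul_exp_neg_le hc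

lemma exp_neg_mul_le_mul_powExpSeries (q : ℕ) {c : ℝ} (hc : 0 < c) :
    exp (-c) * q ! ≤ c ^ (q + 1) * powExpSeries q c := by
  set g : ℝ → ℝ := fun x => x ^ q * exp (-(c * x))
  have hpiece (n : ℕ) :
      exp (-c) * ∫ x in Ioc (n : ℝ) (n + 1), g x ≤
        ((n + 1 : ℝ)) ^ q * exp (-(c * (n + 1))) := by
    rw [← intervalIntegral.integral_of_le (by linarith)]
    calc exp (-c) * ∫ x in (n : ℝ)..n + 1, g x
        ≤ exp (-c) * ∫ _ in (n : ℝ)..n + 1, ((n + 1 : ℝ)) ^ q * exp (-(c * n)) := by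
          gcongr
          refine intervalIntegral.integral_mono_on (by linarith)
            ((by fun_prop : Continuous g).intervalIntegrable _ _) intervalIntegrable_const
            fun x ⟨hnx, hxn⟩ => ?_
          have hx : 0 ≤ x := le_trans (Nat.cast_nonneg n) hnx
          change x ^ q * exp (-(c * x)) ≤ _
          gcongr
      _ = ((n + 1 : ℝ)) ^ q * exp (-(c * (n + 1))) := by
          rw [intervalIntegral.integral_const, smul_eq_mul, add_sub_cancel_left, one_mul,
            mul_left_comm, ← exp_add]
          ring_nf
  have hsum := hasSum_le hpiece
    ((hasSum_integral_Ioc_nat (integrableOn_pow_mul_exp_neg_mul_Ioi q hc)).mul_left _)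
    (summable_powExpSeries q hc).hasSum
  rw [integral_pow_mul_exp_neg_mul_Ioi q hc, ← mul_div_assoc,
    div_le_iff₀' (by positivity)] at hsum
  exact hsum

lemma powExpSeries_le_exp_neg_half_mul (q : ℕ) {t : ℝ} (ht : 0 < t) :
    powExpSeries q t ≤ exp (-(t / 2)) * powExpSeries q (t / 2) := by
  rw [powExpSeries, powExpSeries, ← tsum_mul_left]
  refine (summable_powExpSeries q ht).tsum_le_tsum (fun ℓ => ?_)
    ((summable_powExpSeries q (half_pos ht)).mul_left _)
  rw [mul_left_comm, ← exp_add]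
  gcongr
  nlinarith [(Nat.cast_nonneg ℓ : (0 : ℝ) ≤ ℓ)]

lemma mul_powExpSeries_le_two_pow (q : ℕ) {t : ℝ} (ht : 0 < t) :
    t ^ (q + 1) * powExpSeries q t ≤ 2 ^ (q + 1) * q ! :=
  calc t ^ (q + 1) * powExpSeries q t
      ≤ t ^ (q + 1) * (exp (-(t / 2)) * powExpSeries q (t / 2)) := by
        gcongr
        exact powExpSeries_le_exp_neg_half_mul q ht
    _ = 2 ^ (q + 1) * exp (-(t / 2)) * ((t / 2) ^ (q + 1) * powExpSeries q (t / 2)) := by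
        rw [div_pow]
        field_simp
    _ ≤ 2 ^ (q + 1) * exp (-(t / 2)) * (exp (t / 2) * q !) :=
        mul_le_mul_of_nonneg_left (mul_powExpSeries_le q (half_pos ht)) (by positivity)
    _ = 2 ^ (q + 1) * q ! := by
        rw [mul_assoc, ← mul_assoc (exp _), ← exp_add, neg_add_cancel, exp_zero, one_mul]

lemma tendsto_mul_powExpSeries (q : ℕ) :
    Tendsto (fun t => t ^ (q + 1) * powExpSeries q t) (𝓝[>] 0) (𝓝 (q ! : ℝ)) := by
  have ht : Tendsto (fun t : ℝ => t) (𝓝[>] 0) (𝓝 0) := nhdsWithin_le_nhds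
  refine tendsto_of_tendsto_of_tendsto_of_le_of_le'
    (by simpa using ((continuous_exp.tendsto _).comp ht.neg).mul_const (q ! : ℝ))
    (by simpa using ((continuous_exp.tendsto 0).comp ht).mul_const (q ! : ℝ)) ?_ ?_
  · filter_upwards [self_mem_nhdsWithin] with t ht
    exact exp_neg_mul_le_mul_powExpSeries q ht
  · filter_upwards [self_mem_nhdsWithin] with t ht
    exact mul_powExpSeries_le q ht

lemma tsum_pow_mul_tsum_eq_tsum_mul_powExpSeries (q : ℕ) (c : ℕ → ℝ) {β : ℝ}
    (hβ : 0 < β) (hc : Summable fun k : ℕ => |c k| * exp (-((k + 1) * β))) :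
    ∑' ℓ : ℕ, ((ℓ + 1 : ℝ)) ^ q * ∑' k : ℕ, c k * exp (-((k + 1) * β * (ℓ + 1))) =
      ∑' k : ℕ, c k * powExpSeries q ((k + 1) * β) := by
  set F : ℕ → ℕ → ℝ := fun ℓ k =>
    ((ℓ + 1 : ℝ)) ^ q * (c k * exp (-((k + 1) * β * (ℓ + 1))))
  -- `(k + 1)(ℓ + 1) ≥ (k + 1) + (ℓ + 1) - 1` splits the exponential into a product.
  have hF : Summable (Function.uncurry F) := by
    refine Summable.of_norm_bounded (((summable_powExpSeries q hβ).mul_of_nonneg hc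
      (fun _ => by positivity) fun _ => by positivity).mul_left (exp β)) fun ⟨ℓ, k⟩ => ?_
    calc ‖F ℓ k‖ = ((ℓ + 1 : ℝ)) ^ q * (|c k| * exp (-((k + 1) * β * (ℓ + 1)))) := by
          simp only [F, norm_mul, norm_pow, Real.norm_eq_abs,
            abs_exp, abs_of_nonneg (by positivity : (0 : ℝ) ≤ ℓ + 1)]
      _ ≤ ((ℓ + 1 : ℝ)) ^ q * (|c k| * exp (β + -(β * (ℓ + 1)) + -((k + 1) * β))) := by
          gcongr
          nlinarith [mul_nonneg (mul_nonneg hβ.le (Nat.cast_nonneg k)) (Nat.cast_nonneg ℓ)]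
      _ = _ := by rw [exp_add, exp_add]; ring
  calc _ = ∑' ℓ : ℕ, ∑' k : ℕ, F ℓ k := by simp only [F, tsum_mul_left]
    _ = ∑' k : ℕ, ∑' ℓ : ℕ, F ℓ k := hF.tsum_comm.symm
    _ = _ := by
      simp only [F, powExpSeries, ← tsum_mul_left]
      exact tsum_congr fun k => tsum_congr fun ℓ => by ring

lemma tendsto_pow_mul_tsum_mul_powExpSeries {ι : Type*} {l : Filter ι} (q : ℕ) (a : ℕ → ℝ)
    (ha : Summable fun k : ℕ => |a (k + 1)| / (k + 1)) {β : ι → ℝ}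
    (hβ : Tendsto β l (𝓝[>] 0)) :
    Tendsto (fun i => β i ^ (q + 1) *
        ∑' k : ℕ, ((k + 1 : ℝ)) ^ q * a (k + 1) * powExpSeries q ((k + 1) * β i))
      l (𝓝 ((∑' k : ℕ, a (k + 1) / (k + 1)) * q !)) := by
  have hβpos : ∀ᶠ i in l, 0 < β i := hβ self_mem_nhdsWithin
  have hrescale (i : ι) : β i ^ (q + 1) *
      ∑' k : ℕ, ((k + 1 : ℝ)) ^ q * a (k + 1) * powExpSeries q ((k + 1) * β i) =
      ∑' k : ℕ, a (k + 1) / (k + 1) *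
        (((k + 1) * β i) ^ (q + 1) * powExpSeries q ((k + 1) * β i)) := by
    rw [← tsum_mul_left]
    refine tsum_congr fun k => ?_
    rw [mul_pow]
    field_simp
    ring
  simp only [hrescale, ← tsum_mul_right]
  refine tendsto_tsum_of_dominated_convergence
    (bound := fun k : ℕ => |a (k + 1)| / (k + 1) * (2 ^ (q + 1) * q ! : ℝ)) (ha.mul_right _)
    (fun k => ?_) ?_
  · have hk : Tendsto (fun i => (k + 1) * β i) l (𝓝[>] 0) := by
      rw [tendsto_nhdsWithin_iff] at hβ ⊢
      exact ⟨by simpa using hβ.1.const_mul ((k : ℝ) + 1),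
        hβ.2.mono fun i (hi : 0 < β i) => mul_pos k.cast_add_one_pos hi⟩
    exact ((tendsto_mul_powExpSeries q).comp hk).const_mul _
  · filter_upwards [hβpos] with i hi k
    rw [norm_mul, norm_div, Real.norm_eq_abs, Real.norm_of_nonneg k.cast_add_one_pos.le,
      Real.norm_of_nonneg (mul_nonneg (by positivity) (powExpSeries_nonneg _ _))]
    exact mul_le_mul_of_nonneg_left (mul_powExpSeries_le_two_pow q (by positivity))
      (by positivity)

theorem stmt_10 (a : ℕ → ℝ) (γ : ℝ) (hγ : 0 < γ)
    (hsum : Summable (fun k : ℕ => |a (k + 1)| / (k + 1)))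
    (hγ2 : γ ^ 2 = ∑' k : ℕ, a (k + 1) / (k + 1))
    (q : ℕ) (hq : 1 ≤ q)
    (hq_sum : ∀ α : ℝ, 0 < α →
      Summable (fun k : ℕ => ((k + 1 : ℝ)) ^ q * |a (k + 1)| * Real.exp (-((k + 1) * α)))) :
    Tendsto
      (fun n : ℕ =>
        (∑' ℓ : ℕ, ((ℓ + 1 : ℝ)) ^ q *
            ∑' k : ℕ, ((k + 1 : ℝ)) ^ q * a (k + 1) *
              Real.exp (-((k + 1) * (γ / Real.sqrt n) * (ℓ + 1)))) /
          (((Nat.factorial q : ℝ) / γ ^ (q - 1)) * (n : ℝ) ^ (((q : ℝ) + 1) / 2)))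
      atTop (nhds 1) := by
  obtain ⟨m, rfl⟩ := Nat.exists_eq_add_of_le' hq
  have hβ : Tendsto (fun n : ℕ => γ / √n) atTop (𝓝[>] 0) := by
    refine tendsto_nhdsWithin_iff.2 ⟨tendsto_const_nhds.div_atTop
      (tendsto_sqrt_atTop.comp tendsto_natCast_atTop_atTop), ?_⟩
    filter_upwards [eventually_ge_atTop 1] with n hn
    exact div_pos hγ (sqrt_pos.2 (by exact_mod_cast hn))
  have hlim := (tendsto_pow_mul_tsum_mul_powExpSeries (m + 1) a hsum hβ).div_const
    (γ ^ 2 * (m + 1) !)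
  rw [← hγ2, div_self (by positivity)] at hlim
  refine hlim.congr' ?_
  filter_upwards [eventually_ge_atTop 1] with n hn
  have hs : 0 < √(n : ℝ) := sqrt_pos.2 (by exact_mod_cast hn)
  have habs (k : ℕ) : |(k : ℝ) + 1| = k + 1 := abs_of_pos k.cast_add_one_pos
  rw [tsum_pow_mul_tsum_eq_tsum_mul_powExpSeries (m + 1) _ (div_pos hγ hs)
      (by simpa [abs_mul, habs] using hq_sum _ (div_pos hγ hs)),
    rpow_div_two_eq_sqrt _ (Nat.cast_nonneg n),
    (by push_cast; ring : ((m + 1 : ℕ) : ℝ) + 1 = ((m + 2 : ℕ) : ℝ)), rpow_natCast,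
    Nat.add_sub_cancel]
  -- with `β = γ / √n` the normalising factor is `q! γ² / β^(q+1)`
  generalize ∑' k : ℕ, ((k + 1 : ℝ)) ^ (m + 1) * a (k + 1) *
    powExpSeries (m + 1) ((k + 1) * (γ / √n)) = K
  rw [div_pow]
  field_simp
  ring
end

section
/- Let m ∈ ℕ, ρ ∈ (0,1], and H_0(u) = m ln(1 + ρu). Then for every θ ∈ (0,1) and every real t, H_0(θ) - Re H_0(θ e^{it}) ≥ (mρ/(1+ρ)²) θ (1 - cos t). -/
/-!
Put `a = ρθ`. Then `|1 + a e^{it}|² = (1 + a)² - 2a(1 - cos t)`, so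
`H₀(θ) - Re H₀(θe^{it}) = -(m/2) log (1 - 2a(1 - cos t)/(1 + a)²)`, and `-log(1 - x) ≥ x` gives
the lower bound `m a (1 - cos t)/(1 + a)²`. Finally `a ≤ ρ` lets us replace `(1 + a)²` by `(1 + ρ)²`.
-/

open Complex

lemma Complex.normSq_one_add_mul_exp_mul_I (a t : ℝ) :
    normSq (1 + a * exp (I * t)) = (1 + a) ^ 2 - 2 * a * (1 - Real.cos t) := by
  rw [mul_comm I, normSq_apply]
  simp only [add_re, add_im, one_re, one_im, re_ofReal_mul, im_ofReal_mul,
    exp_ofReal_mul_I_re, exp_ofReal_mul_I_im]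
  linear_combination a ^ 2 * Real.sin_sq_add_cos_sq t

lemma Complex.re_log_one_add_mul_exp_mul_I (a t : ℝ) :
    (log (1 + a * exp (I * t))).re = Real.log ((1 + a) ^ 2 - 2 * a * (1 - Real.cos t)) / 2 := by
  rw [log_re, ← normSq_one_add_mul_exp_mul_I, norm_def, Real.log_sqrt (normSq_nonneg _)]

lemma Real.div_le_log_sub_log {x y : ℝ} (hx : 0 < x) (hy : 0 < y) :
    (x - y) / x ≤ log x - log y :=
  calc (x - y) / x = 1 - (x / y)⁻¹ := by field_simp
    _ ≤ log (x / y) := one_sub_inv_le_log_of_pos (div_pos hx hy)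
    _ = log x - log y := log_div hx.ne' hy.ne'

lemma Real.div_le_log_one_add_sub_re_log {a : ℝ} (ha₀ : 0 ≤ a) (ha₁ : a < 1) (t : ℝ) :
    a * (1 - cos t) / (1 + a) ^ 2 ≤
      log (1 + a) - (Complex.log (1 + a * Complex.exp (Complex.I * t))).re := by
  have hcos := neg_one_le_cos t
  have hpos : 0 < (1 + a) ^ 2 - 2 * a * (1 - cos t) := by nlinarith
  have := div_le_log_sub_log (by positivity : (0 : ℝ) < (1 + a) ^ 2) hpos
  rw [Complex.re_log_one_add_mul_exp_mul_I]
  rw [log_pow, Nat.cast_ofNat,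
    show (1 + a) ^ 2 - ((1 + a) ^ 2 - 2 * a * (1 - cos t)) = 2 * (a * (1 - cos t)) by ring,
    mul_div_assoc] at this
  linarith

theorem stmt_11_general (m : ℕ) (ρ : ℝ) (hρ : ρ ∈ Set.Ioc (0 : ℝ) 1)
    (θ : ℝ) (hθ : θ ∈ Set.Ioo (0 : ℝ) 1) (t : ℝ) :
    (m : ℝ) * Real.log (1 + ρ * θ) -
        ((m : ℂ) * Complex.log (1 + (ρ : ℂ) * (θ : ℂ) * Complex.exp (Complex.I * t))).re ≥
      ((m : ℝ) * ρ / (1 + ρ) ^ 2) * θ * (1 - Real.cos t) := by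
  obtain ⟨hρ₀, hρ₁⟩ := hρ
  obtain ⟨hθ₀, hθ₁⟩ := hθ
  have ha₀ : 0 ≤ ρ * θ := by positivity
  have haρ : ρ * θ ≤ ρ := mul_le_of_le_one_right hρ₀.le hθ₁.le
  have hbound := Real.div_le_log_one_add_sub_re_log ha₀ (by nlinarith) t
  have hden : ρ * θ * (1 - Real.cos t) / (1 + ρ) ^ 2 ≤ ρ * θ * (1 - Real.cos t) / (1 + ρ * θ) ^ 2 :=
    div_le_div_of_nonneg_left (mul_nonneg ha₀ (by linarith [Real.cos_le_one t])) (by positivity)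
      (by gcongr)
  rw [← ofReal_natCast, re_ofReal_mul, ← ofReal_mul]
  calc ((m : ℝ) * ρ / (1 + ρ) ^ 2) * θ * (1 - Real.cos t)
      = m * (ρ * θ * (1 - Real.cos t) / (1 + ρ) ^ 2) := by ring
    _ ≤ m * (Real.log (1 + ρ * θ) - (log (1 + (ρ * θ : ℝ) * exp (I * t))).re) := by
        gcongr; exact hden.trans hbound
    _ = _ := by ring

theorem stmt_11 (m : ℕ) (hm : 1 ≤ m) (ρ : ℝ) (hρ : ρ ∈ Set.Ioc (0 : ℝ) 1)
    (θ : ℝ) (hθ : θ ∈ Set.Ioo (0 : ℝ) 1) (t : ℝ) :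
    (m : ℝ) * Real.log (1 + ρ * θ) -
        ((m : ℂ) * Complex.log (1 + (ρ : ℂ) * (θ : ℂ) * Complex.exp (Complex.I * t))).re ≥
      ((m : ℝ) * ρ / (1 + ρ) ^ 2) * θ * (1 - Real.cos t) :=
  stmt_11_general m ρ hρ θ hθ t
end

section
/- Let f_0(u) = -ln(1 - ρu)/(ρu) for ρ ∈ (0,1], and write r ln f_0(u) = ∑_{k=1}^∞ a_k u^k for its power series around 0 (r > 0). Then for every k ≥ 1, r ρ^k/(k²(k+1)) ≤ a_k ≤ r ρ^k/(k+1); in particular all a_k are positive. -/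
/-!
For `0 ≤ s ≤ 1` the binomial series `(1 - t) ^ (-s) = ∑ multichoose s n * t ^ n` has coefficients
between `s / n` and `s` for `n ≥ 1`. Integrating over `s ∈ [0, 1]` gives
`∑ Sₙ tⁿ = t / ((1 - t) * -log (1 - t))` with `Sₙ = ∫₀¹ multichoose s n ds ∈ [1 / (2n), 1 / 2]`,
and `(∑ Sₙ tⁿ - 1) / t` is exactly the derivative of `log (-log (1 - t) / t)`. Hence
`log (-log (1 - t) / t) = ∑_{n ≥ 1} Sₙ tⁿ / n`, so by uniqueness of power series coefficients
`a_k = r ρ^k S_k / k`, and the bounds on `S_k` give the claim.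
-/

open Real Filter Topology Set
open Ring (multichoose)

namespace Real

theorem factorial_mul_multichoose (s : ℝ) (n : ℕ) :
    (n.factorial : ℝ) * multichoose s n = (ascPochhammer ℝ n).eval s := by
  rw [← nsmul_eq_mul, Ring.factorial_nsmul_multichoose_eq_ascPochhammer,
    Polynomial.ascPochhammer_smeval_eq_eval]

theorem multichoose_succ (s : ℝ) (n : ℕ) :
    multichoose s (n + 1) = (s + n) / (n + 1) * multichoose s n := by
  have h := factorial_mul_multichoose s (n + 1)
  rw [ascPochhammer_succ_eval, ← factorial_mul_multichoose, Nat.factorial_succ] at h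
  push_cast at h
  have hf : (n.factorial : ℝ) ≠ 0 := by positivity
  field_simp
  apply mul_left_cancel₀ hf
  linear_combination h

theorem continuous_multichoose (n : ℕ) : Continuous fun s : ℝ => multichoose s n := by
  have hf : (n.factorial : ℝ) ≠ 0 := by positivity
  have h : (fun s : ℝ => multichoose s n) = fun s => (ascPochhammer ℝ n).eval s / n.factorial :=
    funext fun s => by rw [← factorial_mul_multichoose, mul_div_cancel_left₀ _ hf]
  rw [h]
  fun_prop

variable {s : ℝ}

theorem multichoose_nonneg (hs : 0 ≤ s) (n : ℕ) : 0 ≤ multichoose s n := by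
  induction n with
  | zero => simp
  | succ n ih => rw [multichoose_succ]; positivity

theorem multichoose_le_self (hs0 : 0 ≤ s) (hs1 : s ≤ 1) {n : ℕ} (hn : 1 ≤ n) :
    multichoose s n ≤ s := by
  induction n, hn using Nat.le_induction with
  | base => rw [Ring.multichoose_one_right]
  | succ n _ ih =>
    rw [multichoose_succ]
    refine (mul_le_of_le_one_left (multichoose_nonneg hs0 n) ?_).trans ih
    rw [div_le_one (by positivity)]
    linarith

theorem div_le_multichoose (hs : 0 ≤ s) {n : ℕ} (hn : 1 ≤ n) :
    s / n ≤ multichoose s n := by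
  induction n, hn using Nat.le_induction with
  | base => simp
  | succ n hn ih =>
    have hn' : (0 : ℝ) < n := by exact_mod_cast hn
    calc s / ↑(n + 1) = n / (n + 1) * (s / n) := by push_cast; field_simp
      _ ≤ (s + n) / (n + 1) * multichoose s n := by gcongr; linarith
      _ = multichoose s (n + 1) := (multichoose_succ s n).symm

theorem multichoose_le_one (hs0 : 0 ≤ s) (hs1 : s ≤ 1) (n : ℕ) : multichoose s n ≤ 1 := by
  rcases Nat.eq_zero_or_pos n with rfl | hn
  · simp
  · exact (multichoose_le_self hs0 hs1 hn).trans hs1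

theorem hasSum_multichoose_mul_pow (s : ℝ) {t : ℝ} (ht : |t| < 1) :
    HasSum (fun n => multichoose s n * t ^ n) ((1 - t) ^ (-s)) := by
  have h := (one_div_one_sub_rpow_hasFPowerSeriesOnBall_zero s).hasSum (y := t)
    (by simpa [Metric.mem_eball, edist_dist] using ht)
  have h1t : 0 ≤ 1 - t := by linarith [le_abs_self t]
  simp only [FormalMultilinearSeries.ofScalars_apply_eq, smul_eq_mul, zero_add, one_div] at h
  simpa only [Ring.multichoose_eq, rpow_neg h1t] using h

end Real

noncomputable def meanMultichoose (n : ℕ) : ℝ := ∫ s in (0 : ℝ)..1, multichoose s n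

theorem meanMultichoose_nonneg (n : ℕ) : 0 ≤ meanMultichoose n :=
  intervalIntegral.integral_nonneg zero_le_one fun _ hs => multichoose_nonneg hs.1 n

theorem meanMultichoose_zero : meanMultichoose 0 = 1 := by
  simp [meanMultichoose]

theorem meanMultichoose_le_half {n : ℕ} (hn : 1 ≤ n) : meanMultichoose n ≤ 1 / 2 := by
  calc meanMultichoose n ≤ ∫ s in (0 : ℝ)..1, s :=
        intervalIntegral.integral_mono_on zero_le_one
          ((continuous_multichoose n).intervalIntegrable _ _)
          (continuous_id.intervalIntegrable _ _)
          fun s hs => multichoose_le_self hs.1 hs.2 hn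
    _ = 1 / 2 := by norm_num [integral_id]

theorem inv_two_mul_le_meanMultichoose {n : ℕ} (hn : 1 ≤ n) :
    1 / (2 * n) ≤ meanMultichoose n := by
  calc 1 / (2 * n : ℝ) = ∫ s in (0 : ℝ)..1, s / n := by
        rw [intervalIntegral.integral_div, integral_id]; ring
    _ ≤ meanMultichoose n :=
        intervalIntegral.integral_mono_on zero_le_one
          ((continuous_id.div_const _).intervalIntegrable _ _)
          ((continuous_multichoose n).intervalIntegrable _ _)
          fun s hs => div_le_multichoose hs.1 hn

theorem integral_one_sub_rpow_neg {t : ℝ} (ht0 : 0 < t) (ht1 : t < 1) :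
    ∫ s in (0 : ℝ)..1, (1 - t) ^ (-s) = t / ((1 - t) * -log (1 - t)) := by
  have h1t : 0 < 1 - t := by linarith
  have hL : -log (1 - t) ≠ 0 := (neg_pos.2 (log_neg h1t (by linarith))).ne'
  have hexp : ∀ s : ℝ, (1 - t) ^ (-s) = exp (-log (1 - t) * s) := fun s => by
    rw [rpow_def_of_pos h1t]; ring_nf
  simp_rw [hexp]
  rw [intervalIntegral.integral_comp_mul_left (fun x => exp x) hL]
  simp only [mul_zero, mul_one, integral_exp, exp_zero, exp_neg, exp_log h1t, smul_eq_mul]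
  field_simp
  ring

theorem hasSum_meanMultichoose_mul_pow {t : ℝ} (ht0 : 0 < t) (ht1 : t < 1) :
    HasSum (fun n => meanMultichoose n * t ^ n) (t / ((1 - t) * -log (1 - t))) := by
  rw [← integral_one_sub_rpow_neg ht0 ht1]
  simp_rw [meanMultichoose, ← intervalIntegral.integral_mul_const]
  refine intervalIntegral.hasSum_integral_of_dominated_convergence (fun n _ => t ^ n)
    (fun n => ((continuous_multichoose n).mul continuous_const).aestronglyMeasurable)
    (fun n => MeasureTheory.ae_of_all _ fun s hs => ?_)
    (MeasureTheory.ae_of_all _ fun _ _ => summable_geometric_of_lt_one ht0.le ht1)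
    intervalIntegrable_const
    (MeasureTheory.ae_of_all _ fun s _ => hasSum_multichoose_mul_pow s (by rwa [abs_of_pos ht0]))
  rw [uIoc_of_le zero_le_one] at hs
  rw [norm_mul, norm_pow, Real.norm_of_nonneg (multichoose_nonneg hs.1.le n),
    Real.norm_of_nonneg ht0.le]
  exact mul_le_of_le_one_left (by positivity) (multichoose_le_one hs.1.le hs.2 n)

theorem hasSum_meanMultichoose_succ_mul_pow {t : ℝ} (ht0 : 0 < t) (ht1 : t < 1) :
    HasSum (fun n => meanMultichoose (n + 1) * t ^ n) (1 / ((1 - t) * -log (1 - t)) - 1 / t) := by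
  have h := ((hasSum_nat_add_iff' 1).2 (hasSum_meanMultichoose_mul_pow ht0 ht1)).div_const t
  rw [Finset.sum_range_one, pow_zero, mul_one, meanMultichoose_zero] at h
  have hterm : (fun n => meanMultichoose (n + 1) * t ^ (n + 1) / t) =
      fun n => meanMultichoose (n + 1) * t ^ n := funext fun n => by
    rw [pow_succ]; field_simp
  have hsum : (t / ((1 - t) * -log (1 - t)) - 1) / t = 1 / ((1 - t) * -log (1 - t)) - 1 / t := by
    field_simp
  rwa [hterm, hsum] at h

theorem summable_mul_pow_succ_div {c : ℕ → ℝ} {C : ℝ} (hc : ∀ n, |c n| ≤ C) {z : ℝ}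
    (hz : |z| < 1) : Summable fun n : ℕ => c n * z ^ (n + 1) / (n + 1) := by
  refine Summable.of_norm_bounded ((summable_geometric_of_lt_one (abs_nonneg z) hz).mul_left C)
    fun n => ?_
  have hC : 0 ≤ C := (abs_nonneg _).trans (hc 0)
  simp only [norm_div, norm_mul, norm_pow, Real.norm_eq_abs]
  rw [abs_of_pos (by positivity : (0 : ℝ) < n + 1), div_le_iff₀ (by positivity)]
  calc |c n| * |z| ^ (n + 1) ≤ C * |z| ^ n * 1 := by
        rw [pow_succ, mul_one]
        gcongr
        · exact hc n
        · exact mul_le_of_le_one_right (by positivity) hz.le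
    _ ≤ C * |z| ^ n * (n + 1) := by gcongr; linarith [n.cast_nonneg (α := ℝ)]

theorem hasDerivAt_tsum_mul_pow_succ_div {c : ℕ → ℝ} {C : ℝ} (hc : ∀ n, |c n| ≤ C) {y : ℝ}
    (hy : |y| < 1) :
    HasDerivAt (fun z => ∑' n : ℕ, c n * z ^ (n + 1) / (n + 1)) (∑' n, c n * y ^ n) y := by
  obtain ⟨b, hyb, hb1⟩ := exists_between hy
  have hb0 : 0 < b := (abs_nonneg y).trans_lt hyb
  refine hasDerivAt_tsum_of_isPreconnected (u := fun n => C * b ^ n)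
    (g := fun n z => c n * z ^ (n + 1) / (n + 1)) (g' := fun n z => c n * z ^ n)
    (t := Ioo (-b) b) (y₀ := 0) ((summable_geometric_of_lt_one hb0.le hb1).mul_left C) isOpen_Ioo
    isPreconnected_Ioo (fun n z _ => ?_) (fun n z hz => ?_) ⟨by linarith, hb0⟩ ?_ (abs_lt.1 hyb)
  · refine (((hasDerivAt_pow (n + 1) z).const_mul (c n)).div_const ((n : ℝ) + 1)).congr_deriv ?_
    rw [Nat.add_sub_cancel]
    push_cast
    field_simp
  · have hC : 0 ≤ C := (abs_nonneg _).trans (hc 0)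
    rw [norm_mul, norm_pow, Real.norm_eq_abs, Real.norm_eq_abs]
    gcongr
    · exact hc n
    · exact (abs_lt.2 hz).le
  · simp

namespace Real

theorem tendsto_neg_log_one_sub_div : Tendsto (fun x => -log (1 - x) / x) (𝓝[≠] 0) (𝓝 1) := by
  have h : HasDerivAt (fun x => -log (1 - x)) 1 0 := by
    simpa using (((hasDerivAt_id (0 : ℝ)).const_sub 1).log (by norm_num)).fun_neg
  simpa [div_eq_inv_mul] using h.tendsto_slope_zero

-- At `x = 0` the function takes the junk value `log (-log 1 / 0) = log 0 = 0`, which is its limit.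
theorem continuousAt_log_neg_log_one_sub_div :
    ContinuousAt (fun x => log (-log (1 - x) / x)) 0 := by
  rw [← continuousWithinAt_compl_self, ContinuousWithinAt]
  simpa [Function.comp_def] using
    (continuousAt_log one_ne_zero).tendsto.comp tendsto_neg_log_one_sub_div

theorem hasDerivAt_log_neg_log_one_sub_div {y : ℝ} (hy0 : 0 < y) (hy1 : y < 1) :
    HasDerivAt (fun x => log (-log (1 - x) / x)) (1 / ((1 - y) * -log (1 - y)) - 1 / y) y := by
  have h1y : 0 < 1 - y := by linarith
  have hL : 0 < -log (1 - y) := neg_pos.2 (log_neg h1y (by linarith))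
  have hderiv : HasDerivAt (fun x => -log (1 - x)) (1 / (1 - y)) y := by
    simpa [neg_div] using (((hasDerivAt_id y).const_sub 1).log h1y.ne').fun_neg
  have hlog : log (1 - y) ≠ 0 := by linarith
  convert (hderiv.fun_div (hasDerivAt_id' y) hy0.ne').log (div_pos hL hy0).ne' using 1
  field_simp
  ring

end Real

theorem hasSum_log_neg_log_one_sub_div {t : ℝ} (ht0 : 0 < t) (ht1 : t < 1) :
    HasSum (fun n : ℕ => meanMultichoose (n + 1) * t ^ (n + 1) / (n + 1))
      (log (-log (1 - t) / t)) := by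
  set W := fun z : ℝ => ∑' n : ℕ, meanMultichoose (n + 1) * z ^ (n + 1) / (n + 1)
  set R := fun x : ℝ => log (-log (1 - x) / x)
  have hbound : ∀ n, |meanMultichoose (n + 1)| ≤ 1 := fun n => by
    rw [abs_of_nonneg (meanMultichoose_nonneg _)]
    linarith [meanMultichoose_le_half (Nat.le_add_left 1 n)]
  have hW : ∀ y, |y| < 1 → HasDerivAt W (∑' n, meanMultichoose (n + 1) * y ^ n) y :=
    fun y hy => hasDerivAt_tsum_mul_pow_succ_div hbound hy
  have hderiv : ∀ y ∈ Ioo 0 t, HasDerivAt (fun x => W x - R x) 0 y := fun y hy => by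
    have hy1 : y < 1 := hy.2.trans ht1
    have h := (hW y (by rw [abs_of_pos hy.1]; exact hy1)).sub
      (hasDerivAt_log_neg_log_one_sub_div hy.1 hy1)
    rwa [(hasSum_meanMultichoose_succ_mul_pow hy.1 hy1).tsum_eq, sub_self] at h
  have hcont : ContinuousOn (fun x => W x - R x) (Icc 0 t) := by
    intro x hx
    rcases hx.1.eq_or_lt with rfl | hx0
    · exact ((hW 0 (by simp)).continuousAt.sub
        continuousAt_log_neg_log_one_sub_div).continuousWithinAt
    · have hx1 : x < 1 := hx.2.trans_lt ht1
      exact ((hW x (by rw [abs_of_pos hx0]; exact hx1)).continuousAt.sub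
        (hasDerivAt_log_neg_log_one_sub_div hx0 hx1).continuousAt).continuousWithinAt
  obtain ⟨_, _, hslope⟩ := exists_hasDerivAt_eq_slope _ _ ht0 hcont hderiv
  have hWR : W t = R t := by
    have : W t - R t - (W 0 - R 0) = 0 := by
      rw [eq_div_iff (by linarith)] at hslope
      linarith
    simpa [W, R, sub_eq_zero] using this
  show HasSum _ (R t)
  rw [← hWR]
  exact (summable_mul_pow_succ_div hbound (by rw [abs_of_pos ht0]; exact ht1)).hasSum

theorem HasSum.mul_pow_of_mul_pow_succ {c : ℕ → ℝ} {u s : ℝ} (hu : u ≠ 0)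
    (h : HasSum (fun n => c n * u ^ (n + 1)) s) : HasSum (fun n => c n * u ^ n) (s / u) :=
  (h.div_const u).congr_fun fun n => by rw [pow_succ]; field_simp

theorem eq_of_hasSum_mul_pow {c d : ℕ → ℝ} {f : ℝ → ℝ} {ε : ℝ} (hε : 0 < ε)
    (hc : ∀ u ∈ Ioo 0 ε, HasSum (fun n => c n * u ^ n) (f u))
    (hd : ∀ u ∈ Ioo 0 ε, HasSum (fun n => d n * u ^ n) (f u)) : c = d := by
  have he : ∀ u ∈ Ioo 0 ε, HasSum (fun n => (c - d) n * u ^ n) 0 := fun u hu => by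
    simpa [sub_mul] using (hc u hu).sub (hd u hu)
  set p := FormalMultilinearSeries.ofScalars ℝ (c - d)
  have hsum : ∀ u ∈ Ioo 0 ε, p.sum u = 0 := fun u hu => by
    simp only [FormalMultilinearSeries.sum, p, FormalMultilinearSeries.ofScalars_apply_eq,
      smul_eq_mul]
    exact (he u hu).tsum_eq
  have hrad : 0 < p.radius := by
    have hu : ε / 2 ∈ Ioo 0 ε := ⟨by positivity, by linarith⟩
    have hlim := tendsto_zero_iff_norm_tendsto_zero.1 (he _ hu).summable.tendsto_atTop_zero
    have hr : (0 : NNReal) < ⟨ε / 2, hu.1.le⟩ := NNReal.coe_pos.1 hu.1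
    refine lt_of_lt_of_le (ENNReal.coe_pos.2 hr)
      (p.le_radius_of_tendsto (l := 0) (hlim.congr fun n => ?_))
    rw [FormalMultilinearSeries.ofScalars_norm, norm_mul, norm_pow, Real.norm_of_nonneg hu.1.le]
    rfl
  rw [← sub_eq_zero, ← FormalMultilinearSeries.ofScalars_series_eq_zero (E := ℝ)]
  by_contra hp
  have hne := (p.hasFPowerSeriesOnBall hrad).hasFPowerSeriesAt.locally_ne_zero hp
  have hmono : 𝓝[>] (0 : ℝ) ≤ 𝓝[≠] 0 := nhdsWithin_mono _ fun x hx => ne_of_gt hx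
  obtain ⟨u, hu_ne, hu_zero⟩ := ((hne.filter_mono hmono).and
    (Filter.eventually_of_mem (Ioo_mem_nhdsGT hε) hsum)).exists
  exact hu_ne hu_zero

theorem one_div_le_meanMultichoose_succ_div (k : ℕ) :
    1 / (((k : ℝ) + 1) ^ 2 * ((k : ℝ) + 2)) ≤ meanMultichoose (k + 1) / (k + 1) := by
  have h := inv_two_mul_le_meanMultichoose (Nat.le_add_left 1 k)
  push_cast at h
  calc 1 / (((k : ℝ) + 1) ^ 2 * ((k : ℝ) + 2)) ≤ 1 / (2 * (k + 1)) / (k + 1) := by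
        rw [div_div, div_le_div_iff_of_pos_left one_pos (by positivity) (by positivity)]
        nlinarith
    _ ≤ meanMultichoose (k + 1) / (k + 1) := by gcongr

theorem meanMultichoose_succ_div_le (k : ℕ) :
    meanMultichoose (k + 1) / (k + 1) ≤ 1 / ((k : ℝ) + 2) := by
  calc meanMultichoose (k + 1) / (k + 1) ≤ 1 / 2 / (k + 1) := by
        gcongr; exact meanMultichoose_le_half (Nat.le_add_left 1 k)
    _ ≤ 1 / ((k : ℝ) + 2) := by
        rw [div_div, div_le_div_iff_of_pos_left one_pos (by positivity) (by positivity)]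
        linarith

theorem stmt_14 (ρ : ℝ) (hρ : ρ ∈ Set.Ioc (0 : ℝ) 1) (r : ℝ) (hr : 0 < r)
    (a : ℕ → ℝ)
    (ha : ∃ ε : ℝ, 0 < ε ∧ ∀ u : ℝ, 0 < u → u < ε →
      HasSum (fun k : ℕ => a (k + 1) * u ^ (k + 1))
        (r * Real.log (-Real.log (1 - ρ * u) / (ρ * u)))) :
    ∀ k : ℕ,
      r * ρ ^ (k + 1) / (((k : ℝ) + 1) ^ 2 * ((k : ℝ) + 2)) ≤ a (k + 1) ∧
        a (k + 1) ≤ r * ρ ^ (k + 1) / ((k : ℝ) + 2) := by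
  obtain ⟨ε, hε, ha⟩ := ha
  have hcoeff : (fun k => a (k + 1)) =
      fun k => r * ρ ^ (k + 1) * (meanMultichoose (k + 1) / (k + 1)) := by
    refine eq_of_hasSum_mul_pow (lt_min hε (inv_pos.2 hρ.1))
      (fun u hu => (ha u hu.1 (hu.2.trans_le (min_le_left _ _))).mul_pow_of_mul_pow_succ hu.1.ne')
      (fun u hu => HasSum.mul_pow_of_mul_pow_succ hu.1.ne' ?_)
    have hρu : ρ * u < 1 := by
      have := mul_lt_mul_of_pos_left (hu.2.trans_le (min_le_right _ _)) hρ.1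
      rwa [mul_inv_cancel₀ hρ.1.ne'] at this
    exact ((hasSum_log_neg_log_one_sub_div (mul_pos hρ.1 hu.1) hρu).mul_left r).congr_fun
      fun k => by ring
  intro k
  have hP : 0 < r * ρ ^ (k + 1) := by have := hρ.1; positivity
  rw [congrFun hcoeff k, ← mul_one_div, ← mul_one_div (r * ρ ^ (k + 1))]
  exact ⟨mul_le_mul_of_nonneg_left (one_div_le_meanMultichoose_succ_div k) hP.le,
    mul_le_mul_of_nonneg_left (meanMultichoose_succ_div_le k) hP.le⟩
end

section
/- Define ã_k recursively (k ≥ 1) by the relations k/(k+1) = ∑_{i=0}^{k-1} ã_{i+1}/(k-i) for all k ≥ 1. Then for every k ≥ 1, 1/(k(k+1)) ≤ ã_k ≤ k/(k+1). -/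
theorem stmt_15 (b : ℕ → ℝ)
    (hrec : ∀ k : ℕ, 1 ≤ k →
      (k : ℝ) / ((k : ℝ) + 1) = ∑ i ∈ Finset.range k, b (i + 1) / ((k : ℝ) - (i : ℝ))) :
    ∀ k : ℕ, 1 ≤ k → 1 / ((k : ℝ) * ((k : ℝ) + 1)) ≤ b k ∧ b k ≤ (k : ℝ) / ((k : ℝ) + 1) := by
  intro k
  induction k using Nat.strong_induction_on with
  | _ k ih =>
  intro hk
  match k, hk with
  | 1, _ =>
    have h := hrec 1 le_rfl
    simp [Finset.sum_range_one] at h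
    norm_num [← h]
  | (n+2), _ =>
    have hb_nonneg : ∀ i, i < n + 1 → 0 ≤ b (i+1) := by
      intro i hi
      have h1 := (ih (i+1) (by omega) (by omega)).1
      have hpos : 0 < 1 / ((((i:ℕ)+1 : ℕ) : ℝ) * ((((i:ℕ)+1 : ℕ) : ℝ) + 1)) := by
        push_cast; positivity
      linarith
    have h1 := hrec (n+1) (by omega)
    have h2 := hrec (n+2) (by omega)
    rw [Finset.sum_range_succ] at h2
    have hlast : ((n+2 : ℕ) : ℝ) - ((n+1 : ℕ) : ℝ) = 1 := by push_cast; ring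
    rw [hlast, div_one] at h2
    have hT1 : (∑ i ∈ Finset.range (n+1), b (i + 1) / (((n+2 : ℕ) : ℝ) - (i : ℝ)))
        ≤ ∑ i ∈ Finset.range (n+1), b (i + 1) / (((n+1 : ℕ) : ℝ) - (i : ℝ)) := by
      apply Finset.sum_le_sum
      intro i hi
      have hi' := Finset.mem_range.mp hi
      have hb := hb_nonneg i hi'
      have hi2 : (i : ℝ) ≤ n := by exact_mod_cast Nat.lt_succ_iff.mp hi'
      apply div_le_div_of_nonneg_left hb
      · push_cast; linarith
      · push_cast; linarith
    have hT0 : 0 ≤ ∑ i ∈ Finset.range (n+1), b (i + 1) / (((n+2 : ℕ) : ℝ) - (i : ℝ)) := by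
      apply Finset.sum_nonneg
      intro i hi
      have hi' := Finset.mem_range.mp hi
      have hi2 : (i : ℝ) ≤ n := by exact_mod_cast Nat.lt_succ_iff.mp hi'
      have hd : 0 < ((n+2 : ℕ) : ℝ) - (i : ℝ) := by push_cast; linarith
      exact div_nonneg (hb_nonneg i hi') hd.le
    have hc1 : ((n+1 : ℕ) : ℝ) / (((n+1 : ℕ) : ℝ) + 1) = ((n:ℝ)+1)/((n:ℝ)+2) := by
      push_cast; ring_nf
    have hc2 : ((n+2 : ℕ) : ℝ) / (((n+2 : ℕ) : ℝ) + 1) = ((n:ℝ)+2)/((n:ℝ)+3) := by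
      push_cast; ring_nf
    rw [hc1] at h1
    rw [hc2] at h2
    have key : ((n:ℝ)+2)/((n:ℝ)+3) - ((n:ℝ)+1)/((n:ℝ)+2)
        = 1 / (((n:ℝ)+2) * ((n:ℝ)+3)) := by
      have h3 : ((n:ℝ)+3) ≠ 0 := by positivity
      have h4 : ((n:ℝ)+2) ≠ 0 := by positivity
      field_simp
      ring
    constructor
    · push_cast
      have : 1 / (((n:ℝ)+2) * ((n:ℝ)+3)) ≤ b (n+2) := by linarith
      convert this using 2
      ring
    · push_cast
      have : b (n+2) ≤ ((n:ℝ)+2)/((n:ℝ)+3) := by linarith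
      convert this using 2; ring
end

section
/- For ρ ∈ (0,1] and real r > 0, the coefficients c_k in the power series expansion (-ln(1-ρu)/(ρu))^r = 1 + ∑_{k=1}^∞ c_k u^k satisfy 0 < c_k < binomial(r+k-1, k) ρ^k = (r(r+1)⋯(r+k-1)/k!) ρ^k for all k ≥ 1. -/
/-!
Write `f₀ = ∑ Xⁿ/(n+1)` for the series of `-log(1 - u)/u`. Its logarithmic derivative
`D = f₀'/f₀` has coefficients in `[0, 1]` and constant term `1/2`, so `L = log f₀` has
nonnegative coefficients and `f₀ʳ = exp (r L)` makes sense formally. Both `F = exp (r L)` and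
`G = (1 - X)^(-r) = ∑ Γ(r+n)/(Γ(r) n!) Xⁿ` solve linear equations `F' = F (r D)` and
`G' = G (r/(1 - X))` with the same initial value, and `r D ≤ r/(1 - X)` coefficientwise with strict
inequality at the constant term; comparing the recursions `(n+1) F_{n+1} = ∑ F_i (rD)_{n-i}` gives
`0 < F_n < G_n` for `n ≥ 1`. Because all coefficients are nonnegative, the double series for
`exp (r L(x))` may be summed in either order, so `∑ F_n xⁿ = (-log(1 - x)/x)ʳ` for `0 < x < 1`, and
uniqueness of power series coefficients identifies `c_k = F_k ρᵏ`.
-/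

open PowerSeries Finset Filter Set Topology NNReal
open scoped Nat

namespace PowerSeries

section ODE

variable {K : Type*} [Field K]

theorem coeff_succ_mul_of_derivative_eq_mul {F D : K⟦X⟧} (hF : d⁄dX K F = F * D) (n : ℕ) :
    coeff (n + 1) F * (n + 1) = ∑ p ∈ antidiagonal n, coeff p.1 F * coeff p.2 D := by
  rw [← coeff_derivative, hF, coeff_mul]

theorem eq_of_derivative_eq_mul [CharZero K] {F G D : K⟦X⟧} (hF : d⁄dX K F = F * D)
    (hG : d⁄dX K G = G * D) (h0 : constantCoeff F = constantCoeff G) : F = G := by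
  ext n
  induction n using Nat.strong_induction_on with
  | _ n ih =>
    cases n with
    | zero => simpa using h0
    | succ n =>
      have hsum := coeff_succ_mul_of_derivative_eq_mul hF n
      rw [sum_congr rfl fun p hp => by rw [ih p.1 (Nat.antidiagonal.fst_lt hp)],
        ← coeff_succ_mul_of_derivative_eq_mul hG n] at hsum
      exact mul_right_cancel₀ (Nat.cast_add_one_ne_zero n) hsum

variable [LinearOrder K] [IsStrictOrderedRing K]

theorem coeff_pos_of_derivative_eq_mul {F D : K⟦X⟧} (hF : d⁄dX K F = F * D)
    (hD : ∀ n, 0 ≤ coeff n D) (hD0 : 0 < constantCoeff D) (hF0 : 0 < constantCoeff F) (n : ℕ) :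
    0 < coeff n F := by
  induction n using Nat.strong_induction_on with
  | _ n ih =>
    cases n with
    | zero => simpa using hF0
    | succ n =>
      have hsum := coeff_succ_mul_of_derivative_eq_mul hF n
      refine pos_of_mul_pos_left (hsum ▸ sum_pos' (fun p hp => ?_) ⟨(n, 0), ?_, ?_⟩)
        n.cast_add_one_pos.le
      · exact mul_nonneg (ih p.1 (Nat.antidiagonal.fst_lt hp)).le (hD p.2)
      · simp
      · exact mul_pos (ih n n.lt_succ_self) (by simpa using hD0)

theorem coeff_succ_lt_of_derivative_eq_mul {F G D E : K⟦X⟧} (hF : d⁄dX K F = F * D)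
    (hG : d⁄dX K G = G * E) (h0 : constantCoeff F = constantCoeff G) (hF0 : 0 < constantCoeff F)
    (hD : ∀ n, 0 ≤ coeff n D) (hD0 : 0 < constantCoeff D) (hDE : ∀ n, coeff n D ≤ coeff n E)
    (hDE0 : constantCoeff D < constantCoeff E) (n : ℕ) : coeff (n + 1) F < coeff (n + 1) G := by
  have hFpos := coeff_pos_of_derivative_eq_mul hF hD hD0 hF0
  have hterm {i j : ℕ} (hi : coeff i F ≤ coeff i G) :
      coeff i F * coeff j D ≤ coeff i G * coeff j E :=
    mul_le_mul hi (hDE j) (hD j) ((hFpos i).le.trans hi)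
  have hle (m : ℕ) : coeff m F ≤ coeff m G := by
    induction m using Nat.strong_induction_on with
    | _ m ih =>
      cases m with
      | zero => simpa using h0.le
      | succ m =>
        refine le_of_mul_le_mul_right ?_ m.cast_add_one_pos
        rw [coeff_succ_mul_of_derivative_eq_mul hF, coeff_succ_mul_of_derivative_eq_mul hG]
        exact sum_le_sum fun p hp => hterm (ih p.1 (Nat.antidiagonal.fst_lt hp))
  refine lt_of_mul_lt_mul_right ?_ n.cast_add_one_pos.le
  rw [coeff_succ_mul_of_derivative_eq_mul hF, coeff_succ_mul_of_derivative_eq_mul hG]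
  refine sum_lt_sum (fun p _ => hterm (hle p.1)) ⟨(n, 0), by simp, ?_⟩
  exact mul_lt_mul' (hle n) (by simpa using hDE0) (by simpa using hD0.le)
    ((hFpos n).trans_le (hle n))

end ODE

section Nonneg
variable {R : Type*} [CommSemiring R] [PartialOrder R] [IsOrderedRing R] {f g : R⟦X⟧}

theorem coeff_mul_nonneg (hf : ∀ n, 0 ≤ coeff n f) (hg : ∀ n, 0 ≤ coeff n g) (n : ℕ) :
    0 ≤ coeff n (f * g) := by
  rw [coeff_mul]
  exact sum_nonneg fun p _ => mul_nonneg (hf p.1) (hg p.2)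

theorem coeff_pow_nonneg (hg : ∀ n, 0 ≤ coeff n g) (m n : ℕ) : 0 ≤ coeff n (g ^ m) := by
  induction m generalizing n with
  | zero => rw [pow_zero, coeff_one]; split_ifs <;> simp
  | succ m ih => rw [pow_succ]; exact coeff_mul_nonneg ih hg n

end Nonneg

section OrderedField
variable {K : Type*} [Field K] [LinearOrder K] [IsStrictOrderedRing K]

theorem coeff_inv_one_sub_X_mul_nonneg {S : K⟦X⟧} (hS : ∀ n, 0 ≤ coeff n S) (n : ℕ) :
    0 ≤ coeff n (1 - X * S)⁻¹ := by
  set U := (1 - X * S)⁻¹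
  have hU : U = 1 + X * (S * U) := by
    have := PowerSeries.mul_inv_cancel (1 - X * S) (by simp)
    linear_combination this
  induction n using Nat.strong_induction_on with
  | _ n ih =>
    rw [hU]
    cases n with
    | zero => simp
    | succ n =>
      rw [map_add, coeff_succ_X_mul, coeff_one, if_neg n.succ_ne_zero, zero_add, coeff_mul]
      exact sum_nonneg fun p hp => mul_nonneg (hS p.1) (ih p.2 (Nat.antidiagonal.snd_lt hp))

end OrderedField

theorem one_sub_X_ne_zero {R : Type*} [CommRing R] [Nontrivial R] : (1 - X : R⟦X⟧) ≠ 0 :=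
  fun h => by simpa using congrArg constantCoeff h

section Exp
variable {A : Type*} [CommRing A] [Algebra ℚ A] {g : A⟦X⟧}

theorem derivative_exp_subst (hg : constantCoeff g = 0) :
    d⁄dX A ((exp A).subst g) = (exp A).subst g * d⁄dX A g := by
  rw [derivative_subst (HasSubst.of_constantCoeff_zero' hg), derivative_exp]

theorem constantCoeff_exp_subst (hg : constantCoeff g = 0) :
    constantCoeff ((exp A).subst g) = 1 := by
  rw [← coeff_zero_eq_constantCoeff_apply, coeff_subst' (HasSubst.of_constantCoeff_zero' hg),
    finsum_eq_single _ 0]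
  · simp
  · intro d hd
    simp [hg, zero_pow hd]

end Exp

section Evaluation
variable {x : ℝ}

theorem hasSum_coeff_mul_mul_pow {f g : ℝ⟦X⟧} {a b : ℝ} (hx : 0 ≤ x)
    (hf : ∀ n, 0 ≤ coeff n f) (hg : ∀ n, 0 ≤ coeff n g)
    (ha : HasSum (fun n => coeff n f * x ^ n) a) (hb : HasSum (fun n => coeff n g * x ^ n) b) :
    HasSum (fun n => coeff n (f * g) * x ^ n) (a * b) := by
  set F := fun n => coeff n f * x ^ n
  set G := fun n => coeff n g * x ^ n
  have hprod := ha.summable.mul_of_nonneg hb.summable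
    (fun n => mul_nonneg (hf n) (pow_nonneg hx n)) (fun n => mul_nonneg (hg n) (pow_nonneg hx n))
  have hcauchy := (summable_sum_mul_antidiagonal_of_summable_mul hprod).hasSum
  rw [← ha.summable.tsum_mul_tsum_eq_tsum_sum_antidiagonal hb.summable hprod, ha.tsum_eq,
    hb.tsum_eq] at hcauchy
  refine hcauchy.congr_fun fun n => ?_
  rw [coeff_mul, sum_mul]
  refine sum_congr rfl fun p hp => ?_
  rw [← mem_antidiagonal.mp hp, pow_add]
  ring

theorem hasSum_coeff_pow_mul_pow {g : ℝ⟦X⟧} {s : ℝ} (hx : 0 ≤ x) (hg : ∀ n, 0 ≤ coeff n g)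
    (hs : HasSum (fun n => coeff n g * x ^ n) s) (m : ℕ) :
    HasSum (fun n => coeff n (g ^ m) * x ^ n) (s ^ m) := by
  induction m with
  | zero =>
    convert hasSum_single (f := fun n => coeff n (g ^ 0) * x ^ n) 0 fun n hn => by
      simp [coeff_one, hn]
    simp
  | succ m ih =>
    rw [pow_succ, pow_succ]
    exact hasSum_coeff_mul_mul_pow hx (coeff_pow_nonneg hg m) hg ih hs

theorem hasSum_coeff_exp_subst_mul_pow {g : ℝ⟦X⟧} {s : ℝ} (hx : 0 ≤ x)
    (hg0 : constantCoeff g = 0) (hg : ∀ n, 0 ≤ coeff n g)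
    (hs : HasSum (fun n => coeff n g * x ^ n) s) :
    HasSum (fun n => coeff n ((exp ℝ).subst g) * x ^ n) (Real.exp s) := by
  have hsubst := HasSubst.of_constantCoeff_zero' hg0
  -- rows of `t` sum to `sᵐ/m!`, columns to the coefficients of `exp ∘ g`
  set t : ℕ × ℕ → ℝ := fun p => coeff p.1 (exp ℝ) * (coeff p.2 (g ^ p.1) * x ^ p.2)
  have hrow (m : ℕ) : HasSum (fun n => t (m, n)) (s ^ m / m !) := by
    simpa [t, coeff_exp, div_eq_inv_mul] using
      (hasSum_coeff_pow_mul_pow hx hg hs m).mul_left (coeff m (exp ℝ))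
  have hexp : HasSum (fun m => s ^ m / m !) (Real.exp s) := by
    rw [Real.exp_eq_exp_ℝ]
    exact NormedSpace.expSeries_div_hasSum_exp s
  have ht : HasSum t (Real.exp s) := by
    have htnn : 0 ≤ t := fun p =>
      mul_nonneg (by simp [coeff_exp]) (mul_nonneg (coeff_pow_nonneg hg _ _) (pow_nonneg hx _))
    have hsum : Summable t := (summable_prod_of_nonneg htnn).2
      ⟨fun m => (hrow m).summable, by simpa only [(hrow _).tsum_eq] using hexp.summable⟩
    exact (hsum.hasSum.prod_fiberwise hrow).unique hexp ▸ hsum.hasSum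
  have hcol (n : ℕ) : HasSum (fun m => t (m, n)) (coeff n ((exp ℝ).subst g) * x ^ n) := by
    have hfin := coeff_subst_finite' hsubst (exp ℝ) n
    have := (hasSum_sum_of_ne_finset_zero (L := .unconditional ℕ)
      fun m (hm : m ∉ hfin.toFinset) =>
        Function.notMem_support.mp (hfin.mem_toFinset.not.mp hm)).mul_right (x ^ n)
    rw [← finsum_eq_sum _ hfin, ← coeff_subst' hsubst] at this
    simpa [t, smul_eq_mul, mul_assoc] using this
  exact ((Equiv.prodComm ℕ ℕ).hasSum_iff.mpr ht).prod_fiberwise hcol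

end Evaluation

end PowerSeries

theorem eq_zero_of_hasSum_pow_mul_eq_zero {b : ℕ → ℝ} {ε : ℝ} (hε : 0 < ε)
    (h : ∀ u ∈ Ioo 0 ε, HasSum (fun k => b k * u ^ k) 0) : b = 0 := by
  set p := FormalMultilinearSeries.ofScalars ℝ b
  lift ε to ℝ≥0 using hε.le
  have hrad : 0 < p.radius := by
    have hterms := (h (ε / 2) ⟨by positivity, by simp; linarith⟩).summable.tendsto_atTop_zero.norm
    refine lt_of_lt_of_le ?_ (p.le_radius_of_tendsto (r := ε / 2) (l := 0) ?_)
    · simpa using hε.ne'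
    · simpa [p, FormalMultilinearSeries.ofScalars_norm] using hterms
  have hp := p.hasFPowerSeriesOnBall hrad
  have hzero : ∀ᶠ z in 𝓝 0, p.sum z = 0 := by
    rw [← hp.analyticAt.frequently_zero_iff_eventually_zero]
    refine (Eventually.frequently ?_).filter_mono (nhdsGT_le_nhdsNE 0)
    filter_upwards [Ioo_mem_nhdsGT hε] with u hu
    simpa [p, FormalMultilinearSeries.sum, FormalMultilinearSeries.ofScalars_apply_eq, mul_comm]
      using (h u hu).tsum_eq
  exact (FormalMultilinearSeries.ofScalars_series_eq_zero ℝ).mp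
    (hp.hasFPowerSeriesAt.eq_zero_of_eventually hzero)

theorem eq_of_hasSum_pow_succ_mul {a b : ℕ → ℝ} {f : ℝ → ℝ} {ε : ℝ} (hε : 0 < ε)
    (ha : ∀ u ∈ Ioo 0 ε, HasSum (fun k => a k * u ^ (k + 1)) (f u))
    (hb : ∀ u ∈ Ioo 0 ε, HasSum (fun k => b k * u ^ (k + 1)) (f u)) : a = b := by
  refine sub_eq_zero.mp (eq_zero_of_hasSum_pow_mul_eq_zero hε fun u hu => ?_)
  have h := ((ha u hu).sub (hb u hu)).div_const u
  rw [sub_self, zero_div] at h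
  refine h.congr_fun fun k => ?_
  rw [Pi.sub_apply]
  field_simp [hu.1.ne']
  ring

noncomputable def f₀Series : ℝ⟦X⟧ := mk fun n => ((n : ℝ) + 1)⁻¹

-- `f₀ = (1 - X a)/(1 - X)` and `f₀' = a/(1 - X)`, so `f₀'/f₀ = a/(1 - X a)` has nonnegative
-- coefficients.
noncomputable def aSeries : ℝ⟦X⟧ := mk fun n => (((n : ℝ) + 1) * ((n : ℝ) + 2))⁻¹

noncomputable def logDerivF₀ : ℝ⟦X⟧ := aSeries * (1 - X * aSeries)⁻¹

noncomputable def logF₀ : ℝ⟦X⟧ := mk fun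
  | 0 => 0
  | n + 1 => coeff n logDerivF₀ / ((n : ℝ) + 1)

theorem one_sub_X_mul_f₀Series : (1 - X) * f₀Series = 1 - X * aSeries := by
  ext (_ | n)
  · simp [f₀Series]
  · simp only [sub_mul, one_mul, map_sub, coeff_succ_X_mul, coeff_one, f₀Series, aSeries,
      coeff_mk]
    push_cast
    field_simp
    ring

theorem one_sub_X_mul_derivative_f₀Series : (1 - X) * d⁄dX ℝ f₀Series = aSeries := by
  ext (_ | n)
  · rw [sub_mul, one_mul, map_sub, coeff_zero_X_mul, sub_zero, coeff_derivative]
    simp [f₀Series, aSeries]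
    norm_num
  · simp only [sub_mul, one_mul, map_sub, coeff_succ_X_mul, coeff_derivative, f₀Series, aSeries,
      coeff_mk]
    push_cast
    field_simp
    ring

theorem one_sub_X_mul_aSeries_mul_inv : (1 - X * aSeries) * (1 - X * aSeries)⁻¹ = 1 :=
  PowerSeries.mul_inv_cancel _ (by simp)

theorem derivative_f₀Series : d⁄dX ℝ f₀Series = f₀Series * logDerivF₀ := by
  refine mul_left_cancel₀ one_sub_X_ne_zero ?_
  rw [one_sub_X_mul_derivative_f₀Series, logDerivF₀, ← mul_assoc, ← mul_assoc,
    one_sub_X_mul_f₀Series, mul_right_comm, one_sub_X_mul_aSeries_mul_inv, one_mul]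

theorem f₀Series_mul_inv : f₀Series * (1 - X * aSeries)⁻¹ = PowerSeries.mk 1 := by
  refine mul_left_cancel₀ one_sub_X_ne_zero ?_
  rw [← mul_assoc, one_sub_X_mul_f₀Series, one_sub_X_mul_aSeries_mul_inv, mul_comm,
    mk_one_mul_one_sub_eq_one]

theorem coeff_logDerivF₀_nonneg (n : ℕ) : 0 ≤ coeff n logDerivF₀ :=
  coeff_mul_nonneg (fun n => by simp [aSeries]; positivity)
    (coeff_inv_one_sub_X_mul_nonneg fun n => by simp [aSeries]; positivity) n

theorem coeff_logDerivF₀_le_one (n : ℕ) : coeff n logDerivF₀ ≤ 1 := by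
  calc coeff n logDerivF₀ ≤ coeff n (f₀Series * (1 - X * aSeries)⁻¹) := by
        rw [logDerivF₀, coeff_mul, coeff_mul]
        refine sum_le_sum fun p _ => mul_le_mul_of_nonneg_right ?_
          (coeff_inv_one_sub_X_mul_nonneg (fun n => by simp [aSeries]; positivity) p.2)
        simp only [aSeries, f₀Series, coeff_mk]
        gcongr
        nlinarith
    _ = 1 := by simp [f₀Series_mul_inv]

theorem constantCoeff_logDerivF₀ : constantCoeff logDerivF₀ = 1 / 2 := by
  simp [logDerivF₀, aSeries]

theorem derivative_logF₀ : d⁄dX ℝ logF₀ = logDerivF₀ := by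
  ext n
  rw [coeff_derivative, logF₀, coeff_mk]
  field_simp

theorem constantCoeff_logF₀ : constantCoeff logF₀ = 0 := by
  simp [logF₀]

theorem coeff_logF₀_nonneg (n : ℕ) : 0 ≤ coeff n logF₀ := by
  rcases n with _ | n
  · simp [logF₀]
  · simpa [logF₀] using div_nonneg (coeff_logDerivF₀_nonneg n) n.cast_add_one_pos.le

theorem coeff_logF₀_le_one (n : ℕ) : coeff n logF₀ ≤ 1 := by
  rcases n with _ | n
  · simp [logF₀]
  · simp only [logF₀, coeff_mk]
    rw [div_le_one n.cast_add_one_pos]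
    linarith [coeff_logDerivF₀_le_one n, (n.cast_nonneg : (0 : ℝ) ≤ n)]

theorem exp_subst_logF₀ : (exp ℝ).subst logF₀ = f₀Series :=
  eq_of_derivative_eq_mul
    (by rw [derivative_exp_subst constantCoeff_logF₀, derivative_logF₀]) derivative_f₀Series
    (by simp [constantCoeff_exp_subst constantCoeff_logF₀, f₀Series])

theorem hasSum_f₀Series {x : ℝ} (hx0 : 0 < x) (hx1 : x < 1) :
    HasSum (fun n => coeff n f₀Series * x ^ n) (-Real.log (1 - x) / x) := by
  have h := (Real.hasSum_pow_div_log_of_abs_lt_one (abs_lt.mpr ⟨by linarith, hx1⟩)).div_const x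
  refine h.congr_fun fun n => ?_
  simp only [f₀Series, coeff_mk, pow_succ]
  field_simp

theorem summable_logF₀ {x : ℝ} (hx0 : 0 ≤ x) (hx1 : x < 1) :
    Summable fun n => coeff n logF₀ * x ^ n :=
  (summable_geometric_of_lt_one hx0 hx1).of_nonneg_of_le
    (fun n => mul_nonneg (coeff_logF₀_nonneg n) (pow_nonneg hx0 n))
    (fun n => mul_le_of_le_one_left (pow_nonneg hx0 n) (coeff_logF₀_le_one n))

-- the binomial series of `(1 - X)^(-r)`, whose coefficients are `binomial(r + n - 1, n)`
noncomputable def invOneSubRpow (r : ℝ) : ℝ⟦X⟧ :=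
  PowerSeries.mk fun n => Real.Gamma (r + n) / (Real.Gamma r * n !)

section invOneSubRpow
variable {r : ℝ}

theorem constantCoeff_invOneSubRpow (hr : 0 < r) : constantCoeff (invOneSubRpow r) = 1 := by
  simp [invOneSubRpow, (Real.Gamma_pos_of_pos hr).ne']

theorem coeff_succ_invOneSubRpow_mul (hr : 0 < r) (n : ℕ) :
    coeff (n + 1) (invOneSubRpow r) * (n + 1) = (r + n) * coeff n (invOneSubRpow r) := by
  have hΓ : Real.Gamma (r + (n + 1 : ℕ)) = (r + n) * Real.Gamma (r + n) := by
    rw [Nat.cast_succ, ← add_assoc, Real.Gamma_add_one (by positivity)]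
  simp only [invOneSubRpow, coeff_mk, hΓ, Nat.factorial_succ, Nat.cast_mul]
  have := (Real.Gamma_pos_of_pos hr).ne'
  field_simp
  push_cast
  ring

theorem derivative_invOneSubRpow (hr : 0 < r) :
    d⁄dX ℝ (invOneSubRpow r) = invOneSubRpow r * (r • PowerSeries.mk 1) := by
  have h : (1 - X) * d⁄dX ℝ (invOneSubRpow r) = r • invOneSubRpow r := by
    ext (_ | n)
    · have h0 := coeff_succ_invOneSubRpow_mul hr 0
      rw [sub_mul, one_mul, map_sub, coeff_zero_X_mul, sub_zero, coeff_derivative, coeff_smul]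
      simpa using h0
    · have h1 := coeff_succ_invOneSubRpow_mul hr (n + 1)
      rw [sub_mul, one_mul, map_sub, coeff_succ_X_mul, coeff_derivative, coeff_derivative,
        coeff_smul, smul_eq_mul]
      push_cast at h1 ⊢
      linear_combination h1
  calc d⁄dX ℝ (invOneSubRpow r)
      = (1 - X) * d⁄dX ℝ (invOneSubRpow r) * PowerSeries.mk 1 := by
        rw [mul_comm (1 - X), mul_assoc, mul_comm (1 - X), mk_one_mul_one_sub_eq_one, mul_one]
    _ = invOneSubRpow r * (r • PowerSeries.mk 1) := by rw [h, smul_mul_assoc, mul_smul_comm]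

end invOneSubRpow

noncomputable def f₀Rpow (r : ℝ) : ℝ⟦X⟧ := (exp ℝ).subst (r • logF₀)

section f₀Rpow
variable {r : ℝ}

theorem constantCoeff_smul_logF₀ : constantCoeff (r • logF₀) = 0 := by
  simp [constantCoeff_logF₀]

theorem constantCoeff_f₀Rpow : constantCoeff (f₀Rpow r) = 1 :=
  constantCoeff_exp_subst constantCoeff_smul_logF₀

theorem derivative_f₀Rpow : d⁄dX ℝ (f₀Rpow r) = f₀Rpow r * (r • logDerivF₀) := by
  rw [f₀Rpow, derivative_exp_subst constantCoeff_smul_logF₀, Derivation.map_smul,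
    derivative_logF₀]

theorem hasSum_f₀Rpow (hr : 0 ≤ r) {x : ℝ} (hx0 : 0 < x) (hx1 : x < 1) :
    HasSum (fun n => coeff n (f₀Rpow r) * x ^ n) ((-Real.log (1 - x) / x) ^ r) := by
  obtain ⟨ℓ, hℓ⟩ := summable_logF₀ hx0.le hx1
  have hexp : Real.exp ℓ = -Real.log (1 - x) / x := by
    have h := hasSum_coeff_exp_subst_mul_pow hx0.le constantCoeff_logF₀ coeff_logF₀_nonneg hℓ
    rw [exp_subst_logF₀] at h
    exact h.unique (hasSum_f₀Series hx0 hx1)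
  rw [← hexp, ← Real.exp_mul, mul_comm]
  refine hasSum_coeff_exp_subst_mul_pow hx0.le constantCoeff_smul_logF₀
    (fun n => by simpa using mul_nonneg hr (coeff_logF₀_nonneg n)) ?_
  simpa [mul_assoc] using hℓ.mul_left r

theorem coeff_smul_logDerivF₀_nonneg (hr : 0 < r) (n : ℕ) : 0 ≤ coeff n (r • logDerivF₀) := by
  simpa using mul_nonneg hr.le (coeff_logDerivF₀_nonneg n)

theorem constantCoeff_smul_logDerivF₀_pos (hr : 0 < r) : 0 < constantCoeff (r • logDerivF₀) := by
  simp [constantCoeff_logDerivF₀, hr]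

theorem coeff_f₀Rpow_pos (hr : 0 < r) (n : ℕ) : 0 < coeff n (f₀Rpow r) :=
  coeff_pos_of_derivative_eq_mul derivative_f₀Rpow (coeff_smul_logDerivF₀_nonneg hr)
    (constantCoeff_smul_logDerivF₀_pos hr) (by simp [constantCoeff_f₀Rpow]) n

theorem coeff_succ_f₀Rpow_lt (hr : 0 < r) (n : ℕ) :
    coeff (n + 1) (f₀Rpow r) < coeff (n + 1) (invOneSubRpow r) :=
  coeff_succ_lt_of_derivative_eq_mul derivative_f₀Rpow (derivative_invOneSubRpow hr)
    (by rw [constantCoeff_f₀Rpow, constantCoeff_invOneSubRpow hr])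
    (by simp [constantCoeff_f₀Rpow])
    (coeff_smul_logDerivF₀_nonneg hr) (constantCoeff_smul_logDerivF₀_pos hr)
    (fun n => by simpa using mul_le_of_le_one_right hr.le (coeff_logDerivF₀_le_one n))
    (by simp [constantCoeff_logDerivF₀, hr]; norm_num) n

end f₀Rpow

theorem stmt_17 (ρ : ℝ) (hρ : ρ ∈ Set.Ioc (0 : ℝ) 1) (r : ℝ) (hr : 0 < r)
    (c : ℕ → ℝ)
    (hc : ∃ ε : ℝ, 0 < ε ∧ ∀ u : ℝ, 0 < u → u < ε →
      HasSum (fun k : ℕ => c (k + 1) * u ^ (k + 1))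
        ((-Real.log (1 - ρ * u) / (ρ * u)) ^ r - 1)) :
    ∀ k : ℕ,
      0 < c (k + 1) ∧
        c (k + 1) <
          Real.Gamma (r + (k : ℝ) + 1) / (Real.Gamma r * (Nat.factorial (k + 1) : ℝ)) *
            ρ ^ (k + 1) := by
  obtain ⟨hρ0, hρ1⟩ := hρ
  obtain ⟨ε, hε, hc⟩ := hc
  have hcoeff : (fun k => c (k + 1)) = fun k => coeff (k + 1) (f₀Rpow r) * ρ ^ (k + 1) := by
    refine eq_of_hasSum_pow_succ_mul (lt_min hε one_pos)
      (fun u hu => hc u hu.1 (hu.2.trans_le (min_le_left _ _))) fun u hu => ?_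
    have hρu : ρ * u < 1 := by nlinarith [hu.1, hu.2.trans_le (min_le_right _ _)]
    have h := (hasSum_nat_add_iff' 1).mpr (hasSum_f₀Rpow hr.le (mul_pos hρ0 hu.1) hρu)
    simpa [constantCoeff_f₀Rpow, mul_pow, mul_assoc] using h
  intro k
  have hΓ : coeff (k + 1) (invOneSubRpow r) =
      Real.Gamma (r + k + 1) / (Real.Gamma r * (k + 1)!) := by
    simp [invOneSubRpow, add_assoc]
  rw [congrFun hcoeff k, ← hΓ]
  exact ⟨mul_pos (coeff_f₀Rpow_pos hr _) (pow_pos hρ0 _),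
    mul_lt_mul_of_pos_right (coeff_succ_f₀Rpow_lt hr k) (pow_pos hρ0 _)⟩
end
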